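/- arXiv:2008.04398 — 9 statements merged into one kernel-verified Lean document; each statement's English description precedes it below -/
import Mathlib

section
/- For α ∈ [1,2], let M_α = inf{ n ≥ 0 : 1/2 < S_α^n(1) < α - 1/2 } + 1. Then for all k < M_α one has S_α^k(1-α) = S_α^k(1) - α. -/
/-- The symmetric doubling map `S_α`. -/
noncomputable def symDoubling (α : ℝ) (x : ℝ) : ℝ :=
  if x < -(1/2) then 2*x + α else if x ≤ 1/2 then 2*x else 2*x - α

/-- The condition `1/2 < S_α^n(1) < α - 1/2` defining the matching index:
`M_α = inf {n | matchCond α n} + 1`. -/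
noncomputable def matchCond (α : ℝ) (n : ℕ) : Prop :=
  1/2 < (symDoubling α)^[n] 1 ∧ (symDoubling α)^[n] 1 < α - 1/2

/-!
For `α = 1` the points `1` and `0 = 1 - α` are fixed by `S_1`. For `α > 1` the orbit of `1` stays
in `[α - 1, 1]`, and as long as it avoids the matching window `(1/2, α - 1/2)` the points `x` and
`x - α` fall in corresponding branches of `S_α`: either `x ≤ 1/2` and `x - α < -1/2`, or
`x ≥ α - 1/2` and `x - α ∈ [-1/2, 1/2]`. In both cases `S_α (x - α) = S_α x - α`.
-/

section symDoubling

variable {α x : ℝ}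

lemma symDoubling_of_lt_neg_half (hx : x < -(1/2)) : symDoubling α x = 2 * x + α := by
  rw [symDoubling, if_pos hx]

lemma symDoubling_of_mem_Icc (hx : x ∈ Set.Icc (-(1/2)) (1/2)) : symDoubling α x = 2 * x := by
  rw [symDoubling, if_neg (not_lt.mpr hx.1), if_pos hx.2]

lemma symDoubling_of_half_lt (hx : 1/2 < x) : symDoubling α x = 2 * x - α := by
  rw [symDoubling, if_neg (by linarith), if_neg (not_le.mpr hx)]

lemma symDoubling_one_one : symDoubling 1 1 = 1 := by
  norm_num [symDoubling_of_half_lt]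

lemma symDoubling_one_zero : symDoubling 1 0 = 0 := by
  norm_num [symDoubling_of_mem_Icc]

lemma symDoubling_mem_Icc_and_sub (hα : 1 < α) (hx : x ∈ Set.Icc (α - 1) 1)
    (hnm : ¬ (1/2 < x ∧ x < α - 1/2)) :
    symDoubling α x ∈ Set.Icc (α - 1) 1 ∧ symDoubling α (x - α) = symDoubling α x - α := by
  obtain ⟨hxl, hxu⟩ := hx
  rcases le_or_gt x (1/2) with hle | hgt
  · rw [symDoubling_of_mem_Icc ⟨by linarith, hle⟩, symDoubling_of_lt_neg_half (by linarith)]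
    exact ⟨⟨by linarith, by linarith⟩, by ring⟩
  · have hge : α - 1/2 ≤ x := not_lt.mp fun h => hnm ⟨hgt, h⟩
    rw [symDoubling_of_half_lt hgt, symDoubling_of_mem_Icc ⟨by linarith, by linarith⟩]
    exact ⟨⟨by linarith, by linarith⟩, by ring⟩

lemma iterate_symDoubling_mem_Icc_and_sub (hα : α ∈ Set.Ioc (1:ℝ) 2) (k : ℕ)
    (hk : ∀ n < k, ¬ matchCond α n) :
    (symDoubling α)^[k] 1 ∈ Set.Icc (α - 1) 1 ∧
      (symDoubling α)^[k] (1 - α) = (symDoubling α)^[k] 1 - α := by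
  induction k with
  | zero => exact ⟨⟨by rw [Function.iterate_zero_apply]; linarith [hα.2], le_rfl⟩, rfl⟩
  | succ k ih =>
    obtain ⟨hmem, hsub⟩ := ih fun n hn => hk n (hn.trans k.lt_succ_self)
    rw [Function.iterate_succ_apply', Function.iterate_succ_apply', hsub]
    exact symDoubling_mem_Icc_and_sub hα.1 hmem (hk k k.lt_succ_self)

end symDoubling

/-- For `α ∈ [1,2]` and all `k < M_α` (i.e. no `n < k` satisfies the matching condition,
since `M_α = inf{n ≥ 0 : 1/2 < S_α^n(1) < α - 1/2} + 1`), one has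
`S_α^k(1-α) = S_α^k(1) - α`. -/
theorem stmt1 (α : ℝ) (hα : α ∈ Set.Icc (1:ℝ) 2) (k : ℕ)
    (hk : ∀ n < k, ¬ matchCond α n) :
    (symDoubling α)^[k] (1 - α) = (symDoubling α)^[k] 1 - α := by
  rcases hα.1.eq_or_lt with rfl | hα1
  · rw [sub_self, Function.iterate_fixed symDoubling_one_zero,
      Function.iterate_fixed symDoubling_one_one, sub_self]
  · exact (iterate_symDoubling_mem_Icc_and_sub ⟨hα1, hα.2⟩ k hk).2
end

section
/- For α ∈ [1,2] and all k < M_α - 1, either S_α^k(1) ∈ [(α-1)/2, 1/2] and S_α^k(1) - α ∈ [-1, -1/2), or S_α^k(1) ∈ (1/2, 1] and S_α^k(1) - α ∈ [-1/2, (1-α)/2]. -/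
/-- For `α ∈ [1,2]` and all `k < M_α - 1` (equivalently, `S_α^n(1) ∉ (1/2, α-1/2)` for all
`n ≤ k`), either `S_α^k(1) ∈ [(α-1)/2, 1/2]` and `S_α^k(1) - α ∈ [-1, -1/2)`, or
`S_α^k(1) ∈ (1/2, 1]` and `S_α^k(1) - α ∈ [-1/2, (1-α)/2]`. -/
theorem stmt2 (α : ℝ) (hα : α ∈ Set.Icc (1:ℝ) 2) (k : ℕ)
    (hk : ∀ n ≤ k, ¬ matchCond α n) :
    ((symDoubling α)^[k] 1 ∈ Set.Icc ((α-1)/2) (1/2) ∧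
      (symDoubling α)^[k] 1 - α ∈ Set.Ico (-1:ℝ) (-(1/2))) ∨
    ((symDoubling α)^[k] 1 ∈ Set.Ioc (1/2) 1 ∧
      (symDoubling α)^[k] 1 - α ∈ Set.Icc (-(1/2)) ((1-α)/2)) := by
  obtain ⟨h1, h2⟩ := hα
  rcases eq_or_lt_of_le h1 with h1 | h1
  · -- α = 1: orbit is constantly 1
    subst h1
    have horb : ∀ m : ℕ, (symDoubling 1)^[m] 1 = 1 := by
      intro m
      induction m with
      | zero => rfl
      | succ n ih =>
        rw [Function.iterate_succ_apply', ih, symDoubling]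
        norm_num
    right
    rw [horb]
    refine ⟨⟨by norm_num, le_refl _⟩, by norm_num⟩
  · -- α > 1
    induction k with
    | zero =>
      have h0 := hk 0 (le_refl 0)
      rw [matchCond] at h0
      push_neg at h0
      simp only [Function.iterate_zero_apply] at h0 ⊢
      have hle : α - 1/2 ≤ 1 := h0 (by norm_num)
      right
      refine ⟨⟨by norm_num, le_refl _⟩, ⟨by linarith, by linarith⟩⟩
    | succ k ih =>
      have ihk := ih (fun n hn => hk n (hn.trans (Nat.le_succ k)))
      set x := (symDoubling α)^[k] 1 with hx
      have hiter : (symDoubling α)^[k+1] 1 = symDoubling α x := by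
        rw [Function.iterate_succ_apply', hx]
      have hmc := hk (k+1) (le_refl _)
      rw [matchCond] at hmc
      push_neg at hmc
      rw [hiter] at hmc ⊢
      rcases ihk with ⟨⟨hxa, hxb⟩, ⟨hxc, hxd⟩⟩ | ⟨⟨hxa, hxb⟩, ⟨hxc, hxd⟩⟩
      · -- case A: x ∈ [(α-1)/2, 1/2]
        have hS : symDoubling α x = 2 * x := by
          rw [symDoubling, if_neg (by linarith), if_pos hxb]
        rw [hS] at hmc ⊢
        -- y = 2x ∈ [α-1, 1]
        have hy1 : α - 1 ≤ 2 * x := by linarith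
        have hy2 : 2 * x ≤ 1 := by linarith
        by_cases hc : 2 * x ≤ 1/2
        · left
          refine ⟨⟨by linarith, hc⟩, ⟨by linarith, by linarith⟩⟩
        · push_neg at hc
          have := hmc hc
          right
          refine ⟨⟨hc, hy2⟩, ⟨by linarith, by linarith⟩⟩
      · -- case B: x ∈ (1/2, 1]
        have hS : symDoubling α x = 2 * x - α := by
          rw [symDoubling, if_neg (by linarith), if_neg (by linarith)]
        rw [hS] at hmc ⊢
        have hy1 : α - 1 ≤ 2 * x - α := by linarith
        have hy2 : 2 * x - α ≤ 1 := by linarith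
        by_cases hc : 2 * x - α ≤ 1/2
        · left
          refine ⟨⟨by linarith, hc⟩, ⟨by linarith, by linarith⟩⟩
        · push_neg at hc
          have := hmc hc
          right
          refine ⟨⟨hc, hy2⟩, ⟨by linarith, by linarith⟩⟩
end

section
/- For α ∈ (1, 3/2), if S_α^k(1) ≠ S_α^k(1-α) for all k < M (i.e., k is before the matching time), then the set { S_α^n(1), S_α^n(1-α) : 0 ≤ n ≤ k } has exactly 2(k+1) elements for each k < M_α, provided α is a matching parameter (M_α < ∞ and S_α^{M_α}(1) = S_α^{M_α}(1-α)). -/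
lemma symDoubling_left {α x : ℝ} (h : x < -(1/2)) : symDoubling α x = 2*x + α := by
  unfold symDoubling; rw [if_pos h]

lemma symDoubling_mid {α x : ℝ} (h1 : -(1/2) ≤ x) (h2 : x ≤ 1/2) :
    symDoubling α x = 2*x := by
  unfold symDoubling; rw [if_neg (not_lt.2 h1), if_pos h2]

lemma symDoubling_right {α x : ℝ} (h : 1/2 < x) : symDoubling α x = 2*x - α := by
  unfold symDoubling
  rw [if_neg (by push_neg; linarith), if_neg (not_le.2 h)]

lemma symDoubling_diff_ge {α : ℝ} (hα : 0 < α) {u v : ℝ} (h : 2*α ≤ u - v) :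
    2*α ≤ symDoubling α u - symDoubling α v := by
  unfold symDoubling; split_ifs <;> linarith

lemma symDoubling_iter_diff_ge {α : ℝ} (hα : 0 < α) (t : ℕ) {u v : ℝ} (h : 2*α ≤ u - v) :
    2*α ≤ (symDoubling α)^[t] u - (symDoubling α)^[t] v := by
  induction t generalizing u v with
  | zero => simpa using h
  | succ t ih =>
    rw [Function.iterate_succ_apply, Function.iterate_succ_apply]
    exact ih (symDoubling_diff_ge hα h)

/-- Let `α ∈ (1, 3/2)` be a matching parameter: `M_α = m + 1 < ∞` (where `m` is the minimal
index with `1/2 < S_α^m(1) < α - 1/2`) and `S_α^{M_α}(1) = S_α^{M_α}(1-α)`.  If moreover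
`S_α^k(1) ≠ S_α^k(1-α)` for all `k < M_α`, then for each `k < M_α` the set
`{S_α^n(1), S_α^n(1-α) : 0 ≤ n ≤ k}` has exactly `2(k+1)` elements. -/
theorem stmt3 (α : ℝ) (hα : α ∈ Set.Ioo (1:ℝ) (3/2))
    (m : ℕ) (hm : matchCond α m) (hmin : ∀ n < m, ¬ matchCond α n)
    (hmatch : (symDoubling α)^[m+1] 1 = (symDoubling α)^[m+1] (1-α))
    (hdist : ∀ k < m + 1, (symDoubling α)^[k] 1 ≠ (symDoubling α)^[k] (1-α)) :
    ∀ k < m + 1,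
      (((Finset.range (k+1)).image (fun n => (symDoubling α)^[n] 1)) ∪
        ((Finset.range (k+1)).image (fun n => (symDoubling α)^[n] (1-α)))).card
        = 2 * (k + 1) := by
  obtain ⟨hα1, hα2⟩ := hα
  have hα0 : (0:ℝ) < α := by linarith
  have hm1 := hm.1
  -- a gap of size ≥ 2α at time j+1 ≤ m+1 persists and contradicts matching
  have big : ∀ j, j ≤ m →
      2*α ≤ (symDoubling α)^[j+1] 1 - (symDoubling α)^[j+1] (1-α) → False := by
    intro j hj hge
    have h1 := symDoubling_iter_diff_ge hα0 (m - j) hge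
    rw [← Function.iterate_add_apply, ← Function.iterate_add_apply] at h1
    have he : m - j + (j+1) = m + 1 := by omega
    rw [he, hmatch, sub_self] at h1
    linarith
  -- if the orbit of 1 drops to `≤ 1-α` (while the difference is α), contradiction
  have low_bad : ∀ d j, j ≤ m → m - j ≤ d →
      (symDoubling α)^[j] 1 - (symDoubling α)^[j] (1-α) = α →
      (symDoubling α)^[j] 1 ≤ 1 - α → False := by
    intro d
    induction d with
    | zero =>
      intro j hj hd hΔ hx
      have hjm : j = m := by omega
      subst hjm
      linarith
    | succ d ih =>
      intro j hj hd hΔ hx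
      rcases eq_or_lt_of_le hj with hjm | hjm
      · subst hjm
        linarith
      set x := (symDoubling α)^[j] 1 with hxdef
      set y := (symDoubling α)^[j] (1-α) with hydef
      have hy : y = x - α := by linarith
      by_cases hxl : x < -(1/2)
      · have hyl : y < -(1/2) := by rw [hy]; linarith
        have e1 : (symDoubling α)^[j+1] 1 = 2*x + α := by
          rw [Function.iterate_succ_apply', ← hxdef, symDoubling_left hxl]
        have e2 : (symDoubling α)^[j+1] (1-α) = 2*y + α := by
          rw [Function.iterate_succ_apply', ← hydef, symDoubling_left hyl]
        exact big j (le_of_lt hjm) (by rw [e1, e2]; linarith)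
      · push_neg at hxl
        have hyl : y < -(1/2) := by rw [hy]; linarith
        have e1 : (symDoubling α)^[j+1] 1 = 2*x := by
          rw [Function.iterate_succ_apply', ← hxdef,
            symDoubling_mid hxl (by linarith : x ≤ 1/2)]
        have e2 : (symDoubling α)^[j+1] (1-α) = 2*y + α := by
          rw [Function.iterate_succ_apply', ← hydef, symDoubling_left hyl]
        exact ih (j+1) hjm (by omega) (by rw [e1, e2]; linarith)
          (by rw [e1]; linarith)
  -- main invariant: for n ≤ m the difference equals α and the orbit of 1 is in (1-α, 1]
  have key : ∀ n, n ≤ m →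
      (symDoubling α)^[n] 1 - (symDoubling α)^[n] (1-α) = α ∧
      1 - α < (symDoubling α)^[n] 1 ∧ (symDoubling α)^[n] 1 ≤ 1 := by
    intro n
    induction n with
    | zero =>
      intro _
      simp only [Function.iterate_zero_apply]
      exact ⟨by ring, by linarith, le_refl 1⟩
    | succ n ih =>
      intro hn
      have hnm : n < m := hn
      obtain ⟨hΔ, hlo, hhi⟩ := ih (le_of_lt hnm)
      have hnc := hmin n hnm
      unfold matchCond at hnc
      set x := (symDoubling α)^[n] 1 with hxdef
      set y := (symDoubling α)^[n] (1-α) with hydef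
      have hy : y = x - α := by linarith
      have hxge : -(1/2) ≤ x := by linarith
      by_cases hx2 : x ≤ 1/2
      · have e1 : (symDoubling α)^[n+1] 1 = 2*x := by
          rw [Function.iterate_succ_apply', ← hxdef, symDoubling_mid hxge hx2]
        have hyl : y < -(1/2) := by rw [hy]; linarith
        have e2 : (symDoubling α)^[n+1] (1-α) = 2*y + α := by
          rw [Function.iterate_succ_apply', ← hydef, symDoubling_left hyl]
        refine ⟨by rw [e1, e2]; linarith, ?_, by rw [e1]; linarith⟩
        by_contra hcon
        push_neg at hcon
        exact low_bad (m - (n+1)) (n+1) hn le_rfl (by rw [e1, e2]; linarith) hcon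
      · push_neg at hx2
        have hxge2 : α - 1/2 ≤ x := by
          by_contra hcon
          push_neg at hcon
          exact hnc ⟨hx2, hcon⟩
        have e1 : (symDoubling α)^[n+1] 1 = 2*x - α := by
          rw [Function.iterate_succ_apply', ← hxdef, symDoubling_right hx2]
        have hymid1 : -(1/2) ≤ y := by rw [hy]; linarith
        have hymid2 : y ≤ 1/2 := by rw [hy]; linarith
        have e2 : (symDoubling α)^[n+1] (1-α) = 2*y := by
          rw [Function.iterate_succ_apply', ← hydef, symDoubling_mid hymid1 hymid2]
        exact ⟨by rw [e1, e2]; linarith, by rw [e1]; linarith, by rw [e1]; linarith⟩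
  -- injectivity of the orbit of 1 up to time m
  have inj1 : ∀ i j, i < j → j ≤ m →
      (symDoubling α)^[i] 1 = (symDoubling α)^[j] 1 → False := by
    intro i j hij hjm heq
    have hyij : (symDoubling α)^[i] (1-α) = (symDoubling α)^[j] (1-α) := by
      have h1 := (key i (le_trans (le_of_lt hij) hjm)).1
      have h2 := (key j hjm).1
      linarith
    have e1 : (symDoubling α)^[m+1-j] ((symDoubling α)^[i] 1)
        = (symDoubling α)^[m+1-j] ((symDoubling α)^[j] 1) := by rw [heq]
    have e2 : (symDoubling α)^[m+1-j] ((symDoubling α)^[i] (1-α))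
        = (symDoubling α)^[m+1-j] ((symDoubling α)^[j] (1-α)) := by rw [hyij]
    rw [← Function.iterate_add_apply, ← Function.iterate_add_apply] at e1 e2
    have hj1 : m+1-j+j = m+1 := by omega
    rw [hj1] at e1 e2
    rw [hmatch] at e1
    exact hdist (m+1-j+i) (by omega) (e1.trans e2.symm)
  intro k hk
  have hk' : k ≤ m := by omega
  have hcardA : ((Finset.range (k+1)).image
      (fun n => (symDoubling α)^[n] 1)).card = k+1 := by
    rw [Finset.card_image_of_injOn, Finset.card_range]
    intro i hi j hj hij
    simp only [Finset.coe_range, Set.mem_Iio] at hi hj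
    by_contra hne
    rcases lt_or_gt_of_ne hne with h | h
    · exact inj1 i j h (by omega) hij
    · exact inj1 j i h (by omega) hij.symm
  have hcardB : ((Finset.range (k+1)).image
      (fun n => (symDoubling α)^[n] (1-α))).card = k+1 := by
    rw [Finset.card_image_of_injOn, Finset.card_range]
    intro i hi j hj hij
    simp only [Finset.coe_range, Set.mem_Iio] at hi hj
    have hi' : i ≤ m := by omega
    have hj' : j ≤ m := by omega
    have hxij : (symDoubling α)^[i] 1 = (symDoubling α)^[j] 1 := by
      have h1 := (key i hi').1
      have h2 := (key j hj').1
      simp only at hij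
      linarith
    by_contra hne
    rcases lt_or_gt_of_ne hne with h | h
    · exact inj1 i j h hj' hxij
    · exact inj1 j i h hi' hxij.symm
  have hdisj : Disjoint ((Finset.range (k+1)).image (fun n => (symDoubling α)^[n] 1))
      ((Finset.range (k+1)).image (fun n => (symDoubling α)^[n] (1-α))) := by
    rw [Finset.disjoint_left]
    intro a haA haB
    rw [Finset.mem_image] at haA haB
    obtain ⟨i, hi, hia⟩ := haA
    obtain ⟨j, hj, hja⟩ := haB
    rw [Finset.mem_range] at hi hj
    have h1 : 1 - α < a := by rw [← hia]; exact (key i (by omega)).2.1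
    have h2 : a ≤ 1 - α := by
      rw [← hja]
      have e1 := (key j (by omega)).1
      have e2 := (key j (by omega)).2.2
      linarith
    linarith
  rw [Finset.card_union_of_disjoint hdisj, hcardA, hcardB]
  ring
end

section
/- Let α ∈ (1,3/2) be such that S_α^{M_α-1}(1) ∈ (1/2, α-1/2) (a matching parameter). Then for every word u ∈ {0,1}^{M_α-1} and every j ∈ {0,1}, T_{α,u j}(1) = T_{α,u j}(1-α) = 2 S_α^{M_α-1}(1) - α = S_α^{M_α}(1). In particular all random orbits of 1 and of 1-α under the maps T_{α,0}, T_{α,1} coincide at time M_α. -/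
/-- The two branches `T_{α,0}` (`j = false`) and `T_{α,1}` (`j = true`). -/
noncomputable def randSymDoubling (α : ℝ) (j : Bool) (x : ℝ) : ℝ :=
  match j with
  | false => if x ≤ (1-α)/2 then 2*x + α else if x ≤ 1/2 then 2*x else 2*x - α
  | true  => if x < -(1/2) then 2*x + α else if x < (α-1)/2 then 2*x else 2*x - α

/-- `T_{α,u} = T_{α,u_k} ∘ ⋯ ∘ T_{α,u_1}`. -/
noncomputable def randSymDoublingWord (α : ℝ) (u : List Bool) (x : ℝ) : ℝ :=
  u.foldl (fun y j => randSymDoubling α j y) x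

lemma iter_bounds (α : ℝ) (h1 : 1 < α) (h2 : α < 3/2) (m : ℕ)
    (hmin : ∀ n < m, ¬ matchCond α n) :
    ∀ n ≤ m, α - 1 ≤ (symDoubling α)^[n] 1 ∧ (symDoubling α)^[n] 1 ≤ 1 := by
  intro n hn
  induction n with
  | zero =>
    simp only [Function.iterate_zero, id_eq]
    constructor <;> linarith
  | succ k ih =>
    obtain ⟨hl, hu⟩ := ih (le_trans (Nat.le_succ k) hn)
    have hkm : k < m := lt_of_lt_of_le (Nat.lt_succ_self k) hn
    have hnm := hmin k hkm
    unfold matchCond at hnm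
    push_neg at hnm
    rw [Function.iterate_succ_apply']
    set y := (symDoubling α)^[k] 1 with hy
    by_cases hc : y ≤ 1/2
    · have hn1 : ¬ (y < -(1/2)) := by linarith
      simp only [symDoubling, if_neg hn1, if_pos hc]
      constructor <;> linarith
    · push_neg at hc
      have hge : α - 1/2 ≤ y := hnm hc
      have hn1 : ¬ (y < -(1/2)) := by linarith
      have hn2 : ¬ (y ≤ 1/2) := by linarith
      simp only [symDoubling, if_neg hn1, if_neg hn2]
      constructor <;> linarith

set_option maxHeartbeats 1000000 in
lemma step_mem (α x y : ℝ) (h1 : 1 < α) (h2 : α < 3/2)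
    (hl : α - 1 ≤ y) (hu : y ≤ 1) (hcase : y ≤ 1/2 ∨ α - 1/2 ≤ y)
    (hx : x = y ∨ x = y - α) (j : Bool) :
    randSymDoubling α j x = symDoubling α y ∨
    randSymDoubling α j x = symDoubling α y - α := by
  rcases hx with rfl | rfl <;> rcases hcase with hc | hc <;> cases j <;>
    simp only [randSymDoubling, symDoubling] <;> split_ifs <;>
    first
    | (left; linarith)
    | (right; linarith)

lemma word_mem (α : ℝ) (h1 : 1 < α) (h2 : α < 3/2) (m : ℕ)
    (hmin : ∀ n < m, ¬ matchCond α n) :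
    ∀ u : List Bool, u.length ≤ m → ∀ x : ℝ, (x = 1 ∨ x = 1 - α) →
      (randSymDoublingWord α u x = (symDoubling α)^[u.length] 1 ∨
       randSymDoublingWord α u x = (symDoubling α)^[u.length] 1 - α) := by
  intro u
  induction u using List.reverseRecOn with
  | nil =>
    intro _ x hx
    rcases hx with rfl | rfl
    · left; simp [randSymDoublingWord]
    · right; simp [randSymDoublingWord]
  | append_singleton u j ih =>
    intro hlen x hx
    have hlu : u.length < m := by
      have : u.length + 1 ≤ m := by simpa using hlen
      omega
    have hrec := ih (le_of_lt hlu) x hx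
    have hword : randSymDoublingWord α (u ++ [j]) x
        = randSymDoubling α j (randSymDoublingWord α u x) := by
      simp [randSymDoublingWord, List.foldl_append]
    rw [hword, List.length_append]
    simp only [List.length_singleton]
    rw [Function.iterate_succ_apply']
    obtain ⟨hl, hu'⟩ := iter_bounds α h1 h2 m hmin u.length (le_of_lt hlu)
    have hnm := hmin u.length hlu
    unfold matchCond at hnm
    push_neg at hnm
    have hcase : (symDoubling α)^[u.length] 1 ≤ 1/2 ∨
        α - 1/2 ≤ (symDoubling α)^[u.length] 1 := by
      by_cases h : (symDoubling α)^[u.length] 1 ≤ 1/2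
      · exact Or.inl h
      · exact Or.inr (hnm (by linarith))
    exact step_mem α _ _ h1 h2 hl hu' hcase hrec j

lemma final_step (α x y : ℝ) (h1 : 1 < α) (h2 : α < 3/2)
    (hy1 : 1/2 < y) (hy2 : y < α - 1/2) (hx : x = y ∨ x = y - α) (j : Bool) :
    randSymDoubling α j x = 2*y - α := by
  rcases hx with rfl | rfl <;> cases j <;>
    simp only [randSymDoubling] <;> split_ifs <;> linarith

/-- Let `α ∈ (1,3/2)` be a matching parameter: `S_α^{M_α-1}(1) ∈ (1/2, α-1/2)`, where
`M_α - 1 = m` is the minimal such index.  Then for every word `u ∈ {0,1}^{M_α-1}` and every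
`j ∈ {0,1}`, `T_{α,uj}(1) = T_{α,uj}(1-α) = 2·S_α^{M_α-1}(1) - α = S_α^{M_α}(1)`:
all random orbits of `1` and of `1-α` coincide at time `M_α`. -/
theorem stmt6 (α : ℝ) (hα : α ∈ Set.Ioo (1:ℝ) (3/2))
    (m : ℕ) (hm : matchCond α m) (hmin : ∀ n < m, ¬ matchCond α n) :
    ∀ u : List Bool, u.length = m → ∀ j : Bool,
      randSymDoublingWord α (u ++ [j]) 1 = 2 * (symDoubling α)^[m] 1 - α ∧
      randSymDoublingWord α (u ++ [j]) (1-α) = 2 * (symDoubling α)^[m] 1 - α ∧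
      (symDoubling α)^[m+1] 1 = 2 * (symDoubling α)^[m] 1 - α := by
  obtain ⟨h1, h2⟩ := hα
  obtain ⟨hm1, hm2⟩ := hm
  intro u hu j
  set y := (symDoubling α)^[m] 1 with hy
  have hword : ∀ x : ℝ, randSymDoublingWord α (u ++ [j]) x
      = randSymDoubling α j (randSymDoublingWord α u x) := by
    intro x; simp [randSymDoublingWord, List.foldl_append]
  have hmem1 := word_mem α h1 h2 m hmin u (le_of_eq hu) 1 (Or.inl rfl)
  have hmem2 := word_mem α h1 h2 m hmin u (le_of_eq hu) (1 - α) (Or.inr rfl)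
  rw [hu] at hmem1 hmem2
  refine ⟨?_, ?_, ?_⟩
  · rw [hword]; exact final_step α _ y h1 h2 hm1 hm2 hmem1 j
  · rw [hword]; exact final_step α _ y h1 h2 hm1 hm2 hmem2 j
  · rw [Function.iterate_succ_apply', ← hy]
    simp only [symDoubling, if_neg (by linarith : ¬ (y < -(1/2))),
      if_neg (by linarith : ¬ (y ≤ 1/2))]
end

section
/- For α ∈ (1, 3/2) and any k with 1 ≤ k < M_α - 1, define E_k = { u ∈ {0,1}^k : T_{α,u}(1) = S_α^k(1) } and F_k = { u ∈ {0,1}^k : T_{α,u}(1-α) = S_α^k(1) }. Then F_k ⊆ E_k and E_k \ F_k = { b_1⋯b_k }, where b_n is the n-th signed binary digit of 1 under S_α (b_n = 1 if S_α^{n-1}(1) > 1/2, b_n = 0 if |S_α^{n-1}(1)| ≤ 1/2, b_n = -1 otherwise). -/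
/-- The word `b_1 ⋯ b_k` of signed binary digits of `1` under `S_α` before matching,
interpreted in `{0,1}` via: symbol `1` (true) if `S_α^{n-1}(1) > 1/2`, symbol `0` (false)
otherwise (digits `-1` do not occur before matching). -/
noncomputable def digitWord (α : ℝ) (k : ℕ) : List Bool :=
  (List.range k).map (fun n => decide ((1/2 : ℝ) < (symDoubling α)^[n] 1))

/-!
Before matching, the orbit `x_n = S_α^n(1)` stays in `[α - 1, 1]` and avoids `(1/2, α - 1/2)`.
At such a point the branch `T_{α,b}` of the digit `b` of `x_n` maps the pair `(x_n, x_n - α)` to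
`(S_α x_n, S_α x_n - α)`, whereas the other branch sends both points of the pair to the same
image. So along the digit word the orbits of `1` and `1 - α` stay `α` apart, and along any other
word they merge at the first letter where the word leaves the digit word.
-/

open Set

section

variable {α x : ℝ}

lemma symDoubling_mem_Icc (hα : 1 < α) (hx : x ∈ Icc (α - 1) 1)
    (hm : ¬ (1/2 < x ∧ x < α - 1/2)) : symDoubling α x ∈ Icc (α - 1) 1 := by
  obtain ⟨hlo, hhi⟩ := hx
  by_cases h : 1/2 < x
  · have : α - 1/2 ≤ x := not_lt.1 (not_and.1 hm h)
    simp only [symDoubling, mem_Icc]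
    constructor <;> split_ifs <;> linarith
  · simp only [symDoubling, mem_Icc]
    constructor <;> split_ifs <;> linarith

lemma symDoubling_iterate_mem_Icc (hα₁ : 1 < α) (hα₂ : α ≤ 2) {k : ℕ}
    (hk : ∀ n < k, ¬ matchCond α n) : ∀ n ≤ k, (symDoubling α)^[n] 1 ∈ Icc (α - 1) 1
  | 0, _ => by simp only [Function.iterate_zero_apply, mem_Icc]; constructor <;> linarith
  | n + 1, hn => by
    rw [Function.iterate_succ_apply']
    exact symDoubling_mem_Icc hα₁ (symDoubling_iterate_mem_Icc hα₁ hα₂ hk n (by omega))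
      (hk n (by omega))

lemma randSymDoubling_digit (hα : 1 < α) (hx : x ∈ Icc (α - 1) 1)
    (hm : ¬ (1/2 < x ∧ x < α - 1/2)) :
    randSymDoubling α (decide (1/2 < x)) x = symDoubling α x ∧
      randSymDoubling α (decide (1/2 < x)) (x - α) = symDoubling α x - α := by
  obtain ⟨hlo, hhi⟩ := hx
  by_cases h : 1/2 < x
  · have : α - 1/2 ≤ x := not_lt.1 (not_and.1 hm h)
    simp only [h, decide_true, randSymDoubling, symDoubling]
    constructor <;> split_ifs <;> linarith
  · simp only [h, decide_false, randSymDoubling, symDoubling]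
    constructor <;> split_ifs <;> linarith

lemma randSymDoubling_ne_digit (hα : 1 < α) (hx : x ∈ Icc (α - 1) 1)
    (hm : ¬ (1/2 < x ∧ x < α - 1/2)) {j : Bool} (hj : j ≠ decide (1/2 < x)) :
    randSymDoubling α j x = randSymDoubling α j (x - α) := by
  obtain ⟨hlo, hhi⟩ := hx
  by_cases h : 1/2 < x
  · have : α - 1/2 ≤ x := not_lt.1 (not_and.1 hm h)
    rw [decide_eq_true h] at hj
    obtain rfl : j = false := by simpa using hj
    simp only [randSymDoubling]
    split_ifs <;> linarith
  · rw [decide_eq_false h] at hj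
    obtain rfl : j = true := by simpa using hj
    simp only [randSymDoubling]
    split_ifs <;> linarith

end

lemma randSymDoublingWord_append_singleton (α : ℝ) (u : List Bool) (j : Bool) (x : ℝ) :
    randSymDoublingWord α (u ++ [j]) x = randSymDoubling α j (randSymDoublingWord α u x) := by
  simp [randSymDoublingWord]

lemma length_digitWord (α : ℝ) (n : ℕ) : (digitWord α n).length = n := by
  simp [digitWord]

lemma digitWord_succ (α : ℝ) (n : ℕ) :
    digitWord α (n + 1) = digitWord α n ++ [decide (1/2 < (symDoubling α)^[n] 1)] := by
  simp [digitWord, List.range_succ]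

section

variable {α : ℝ} {k : ℕ}

lemma randSymDoublingWord_digitWord (hα₁ : 1 < α) (hα₂ : α ≤ 2)
    (hk : ∀ n < k, ¬ matchCond α n) :
    ∀ n ≤ k, randSymDoublingWord α (digitWord α n) 1 = (symDoubling α)^[n] 1 ∧
      randSymDoublingWord α (digitWord α n) (1 - α) = (symDoubling α)^[n] 1 - α
  | 0, _ => by simp [digitWord, randSymDoublingWord]
  | n + 1, hn => by
    obtain ⟨ih1, ih2⟩ := randSymDoublingWord_digitWord hα₁ hα₂ hk n (by omega)
    rw [digitWord_succ, randSymDoublingWord_append_singleton,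
      randSymDoublingWord_append_singleton, ih1, ih2, Function.iterate_succ_apply']
    exact randSymDoubling_digit hα₁ (symDoubling_iterate_mem_Icc hα₁ hα₂ hk n (by omega))
      (hk n (by omega))

lemma randSymDoublingWord_eq_of_ne_digitWord (hα₁ : 1 < α) (hα₂ : α ≤ 2)
    (hk : ∀ n < k, ¬ matchCond α n)
    (u : List Bool) (hu : u.length ≤ k) (hne : u ≠ digitWord α u.length) :
    randSymDoublingWord α u 1 = randSymDoublingWord α u (1 - α) := by
  induction u using List.reverseRecOn with
  | nil => simp [digitWord] at hne
  | append_singleton v j ih =>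
    have hv : v.length < k := by
      simp only [List.length_append, List.length_singleton] at hu; omega
    rw [randSymDoublingWord_append_singleton, randSymDoublingWord_append_singleton]
    by_cases hvd : v = digitWord α v.length
    · have hj : j ≠ decide (1/2 < (symDoubling α)^[v.length] 1) := by
        rintro rfl
        exact hne (by rw [List.length_append, List.length_singleton, digitWord_succ, ← hvd])
      obtain ⟨h1, h2⟩ := randSymDoublingWord_digitWord hα₁ hα₂ hk v.length hv.le
      rw [hvd, h1, h2]
      exact randSymDoubling_ne_digit hα₁ (symDoubling_iterate_mem_Icc hα₁ hα₂ hk _ hv.le)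
        (hk _ hv) hj
    · rw [ih hv.le hvd]

end

theorem stmt8_general (α : ℝ) (hα : α ∈ Set.Ioo (1:ℝ) (3/2)) (k : ℕ)
    (hk : ∀ n ≤ k, ¬ matchCond α n) :
    ({u : List Bool | u.length = k ∧
        randSymDoublingWord α u (1-α) = (symDoubling α)^[k] 1} ⊆
      {u : List Bool | u.length = k ∧
        randSymDoublingWord α u 1 = (symDoubling α)^[k] 1}) ∧
    ({u : List Bool | u.length = k ∧
        randSymDoublingWord α u 1 = (symDoubling α)^[k] 1} \
      {u : List Bool | u.length = k ∧
        randSymDoublingWord α u (1-α) = (symDoubling α)^[k] 1}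
      = {digitWord α k}) := by
  have hα₁ : 1 < α := hα.1
  have hα₂ : α ≤ 2 := by linarith [hα.2]
  have hk' : ∀ n < k, ¬ matchCond α n := fun n hn => hk n hn.le
  obtain ⟨hb1, hb2⟩ := randSymDoublingWord_digitWord hα₁ hα₂ hk' k le_rfl
  have hb2' : randSymDoublingWord α (digitWord α k) (1 - α) ≠ (symDoubling α)^[k] 1 := by
    rw [hb2]; linarith
  have hother : ∀ u : List Bool, u.length = k → u ≠ digitWord α k →
      randSymDoublingWord α u 1 = randSymDoublingWord α u (1 - α) := by
    rintro u rfl hne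
    exact randSymDoublingWord_eq_of_ne_digitWord hα₁ hα₂ hk' u le_rfl hne
  constructor
  · rintro u ⟨hul, huF⟩
    obtain rfl | hne := eq_or_ne u (digitWord α k)
    · exact absurd huF hb2'
    · exact ⟨hul, (hother u hul hne).trans huF⟩
  · ext u
    simp only [mem_sdiff, mem_ofPred_eq, mem_singleton_iff]
    constructor
    · rintro ⟨⟨hul, huE⟩, hnF⟩
      by_contra hne
      exact hnF ⟨hul, (hother u hul hne).symm.trans huE⟩
    · rintro rfl
      exact ⟨⟨length_digitWord α k, hb1⟩, fun h => hb2' h.2⟩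

/-- For `α ∈ (1,3/2)` and `1 ≤ k < M_α - 1` (encoded: no `n ≤ k` satisfies the matching
condition), with `E_k = {u ∈ {0,1}^k : T_{α,u}(1) = S_α^k(1)}` and
`F_k = {u ∈ {0,1}^k : T_{α,u}(1-α) = S_α^k(1)}`, one has `F_k ⊆ E_k` and
`E_k \ F_k = {b_1⋯b_k}`. -/
theorem stmt8 (α : ℝ) (hα : α ∈ Set.Ioo (1:ℝ) (3/2)) (k : ℕ) (hk1 : 1 ≤ k)
    (hk : ∀ n ≤ k, ¬ matchCond α n) :
    ({u : List Bool | u.length = k ∧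
        randSymDoublingWord α u (1-α) = (symDoubling α)^[k] 1} ⊆
      {u : List Bool | u.length = k ∧
        randSymDoublingWord α u 1 = (symDoubling α)^[k] 1}) ∧
    ({u : List Bool | u.length = k ∧
        randSymDoublingWord α u 1 = (symDoubling α)^[k] 1} \
      {u : List Bool | u.length = k ∧
        randSymDoublingWord α u (1-α) = (symDoubling α)^[k] 1}
      = {digitWord α k}) :=
  stmt8_general α hα k hk
end

section
/- Let α ∈ ((√10-2)/2, 2-√2) and consider the Nakada map T_{α,0}(x) = 1/|x| - ⌊1/|x| + 1 - α⌋ and the Ito–Tanaka map T_{α,1}(x) = 1/x - ⌊1/x + 1 - α⌋ on [α-1, α] (with value 0 at 0). Then T_{α,j}(α) = (1-2α)/α for j = 0,1, T_{α,0}((1-2α)/α) = (5α-3)/(1-2α), and T_{α,1}((1-2α)/α) = (4-7α)/(1-2α). -/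
/-!
Each value is a single step of the map in which the digit `⌊1/x + 1 - α⌋` is pinned down:
it is `2` at `x = α`, and at `x = (1 - 2α)/α` it is `3` for the Nakada map and `-4` for the
Ito–Tanaka map. The endpoints of the interval for `α` are exactly where these digits change:
`α/(2α - 1) = α + 3` at `α = (√10 - 2)/2` and `α/(1 - 2α) = α - 4` at `α = 2 - √2`.
-/

/-- The Nakada `α`-continued fraction map `T_{α,0}(x) = 1/|x| - ⌊1/|x| + 1 - α⌋`,
with value `0` at `0`. -/
noncomputable def nakadaCF (α x : ℝ) : ℝ :=
  if x = 0 then 0 else 1/|x| - (⌊1/|x| + 1 - α⌋ : ℤ)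

/-- The Ito–Tanaka `α`-continued fraction map `T_{α,1}(x) = 1/x - ⌊1/x + 1 - α⌋`,
with value `0` at `0`. -/
noncomputable def itoTanakaCF (α x : ℝ) : ℝ :=
  if x = 0 then 0 else 1/x - (⌊1/x + 1 - α⌋ : ℤ)

theorem nakadaCF_eq_itoTanakaCF_abs (α x : ℝ) : nakadaCF α x = itoTanakaCF α |x| := by
  simp only [nakadaCF, itoTanakaCF, abs_eq_zero]

theorem itoTanakaCF_of_mem_Ico {α x : ℝ} (hx : x ≠ 0) {n : ℤ}
    (h : 1 / x ∈ Set.Ico (n - 1 + α) (n + α)) : itoTanakaCF α x = 1 / x - n := by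
  have hfloor : ⌊1 / x + 1 - α⌋ = n := by
    rw [Int.floor_eq_iff]
    constructor <;> linarith [h.1, h.2]
  rw [itoTanakaCF, if_neg hx, hfloor]

section Branches

variable {α : ℝ}

theorem itoTanakaCF_self (hα : 0 < α) (h₀ : 1 < α * (α + 2)) (h₁ : α * (α + 1) ≤ 1) :
    itoTanakaCF α α = (1 - 2 * α) / α := by
  rw [itoTanakaCF_of_mem_Ico (n := 2) hα.ne' ⟨?_, ?_⟩]
  · field_simp
    push_cast
    ring
  · rw [le_div_iff₀ hα]; push_cast; linarith
  · rw [div_lt_iff₀ hα]; push_cast; linarith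

theorem nakadaCF_one_sub_two_mul_div_self (hα : 1 / 2 < α)
    (h₀ : (2 * α - 1) * (α + 2) ≤ α) (h₁ : α < (2 * α - 1) * (α + 3)) :
    nakadaCF α ((1 - 2 * α) / α) = (5 * α - 3) / (1 - 2 * α) := by
  have hpos : 0 < 2 * α - 1 := by linarith
  have habs : |(1 - 2 * α) / α| = (2 * α - 1) / α := by
    rw [abs_of_neg (div_neg_of_neg_of_pos (by linarith) (by linarith))]
    ring
  rw [nakadaCF_eq_itoTanakaCF_abs, habs,
    itoTanakaCF_of_mem_Ico (n := 3) (div_pos hpos (by linarith)).ne' ⟨?_, ?_⟩]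
  · rw [one_div_div, div_sub' hpos.ne', div_eq_div_iff hpos.ne' (by linarith)]
    push_cast
    ring
  · rw [one_div_div, le_div_iff₀ hpos]; push_cast; linarith
  · rw [one_div_div, div_lt_iff₀ hpos]; push_cast; linarith

theorem itoTanakaCF_one_sub_two_mul_div_self (hα : 1 / 2 < α)
    (h₀ : α ≤ (1 - 2 * α) * (α - 5)) (h₁ : (1 - 2 * α) * (α - 4) < α) :
    itoTanakaCF α ((1 - 2 * α) / α) = (4 - 7 * α) / (1 - 2 * α) := by
  have hneg : 1 - 2 * α < 0 := by linarith
  rw [itoTanakaCF_of_mem_Ico (n := -4) (div_neg_of_neg_of_pos hneg (by linarith)).ne ⟨?_, ?_⟩]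
  · rw [one_div_div, eq_div_iff hneg.ne, sub_mul, div_mul_cancel₀ _ hneg.ne]
    push_cast
    ring
  · rw [one_div_div, le_div_iff_of_neg hneg]; push_cast; linarith
  · rw [one_div_div, div_lt_iff_of_neg hneg]; push_cast; linarith

end Branches

theorem two_mul_sq_add_four_mul_sub_three_pos {α : ℝ} (h : (Real.sqrt 10 - 2) / 2 < α) :
    0 < 2 * α ^ 2 + 4 * α - 3 := by
  have hsq : Real.sqrt 10 ^ 2 = 10 := Real.sq_sqrt (by norm_num)
  nlinarith [Real.sqrt_nonneg 10]

theorem sq_sub_four_mul_add_two_pos {α : ℝ} (h : α < 2 - Real.sqrt 2) :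
    0 < α ^ 2 - 4 * α + 2 := by
  have hsq : Real.sqrt 2 ^ 2 = 2 := Real.sq_sqrt (by norm_num)
  nlinarith [Real.sqrt_nonneg 2]

/-- For `α ∈ ((√10-2)/2, 2-√2)`: `T_{α,j}(α) = (1-2α)/α` for `j = 0,1`,
`T_{α,0}((1-2α)/α) = (5α-3)/(1-2α)` and `T_{α,1}((1-2α)/α) = (4-7α)/(1-2α)`. -/
theorem stmt14 (α : ℝ)
    (hα : α ∈ Set.Ioo ((Real.sqrt 10 - 2)/2) (2 - Real.sqrt 2)) :
    nakadaCF α α = (1-2*α)/α ∧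
    itoTanakaCF α α = (1-2*α)/α ∧
    nakadaCF α ((1-2*α)/α) = (5*α-3)/(1-2*α) ∧
    itoTanakaCF α ((1-2*α)/α) = (4-7*α)/(1-2*α) := by
  obtain ⟨hlo, hhi⟩ := hα
  have hlo' := two_mul_sq_add_four_mul_sub_three_pos hlo
  have hhi' := sq_sub_four_mul_add_two_pos hhi
  have hsqrt : (2 : ℝ) < Real.sqrt 10 := (Real.lt_sqrt (by norm_num)).mpr (by norm_num)
  have hpos : 0 < α := by linarith
  have hlt : α < 2 := by linarith [Real.sqrt_nonneg 2]
  have hα₀ : 1 / 2 < α := by nlinarith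
  have hself := itoTanakaCF_self hpos (by nlinarith) (by nlinarith)
  refine ⟨?_, hself, nakadaCF_one_sub_two_mul_div_self hα₀ (by nlinarith) (by nlinarith),
    itoTanakaCF_one_sub_two_mul_div_self hα₀ (by nlinarith) (by nlinarith)⟩
  rw [nakadaCF_eq_itoTanakaCF_abs, abs_of_pos hpos, hself]
end

section
/- Let α ∈ (1, 3/2) be a parameter such that the random symmetric doubling map R_α has strong random matching with matching exponent M = M_α + 1, and let p ∈ (0,1). If μ_p is the unique R_α-stationary probability measure absolutely continuous with respect to Lebesgue measure, with density f_p, then f_p is constant and equal to 1/α on the interval [1-α, α-1]. -/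
open MeasureTheory

/-!
Both branches of `R_α` agree with `x ↦ 2x` modulo `α`, so stationarity makes the image `ρ` of
`μ_p` on the circle `ℝ/αℤ` invariant under doubling, and its Fourier coefficients satisfy
`ρ̂(n) = ρ̂(2^k n)`. As `μ_p` has a density, they tend to `0` by the Riemann–Lebesgue lemma, so
`ρ̂(n) = 0` for `n ≠ 0` and `ρ` is the normalised Haar measure.

Stationarity also confines `μ_p` to `[-1, 1]`: the mass of `{|x| > t}` is unchanged under
`t ↦ (t + α)/2`, which pulls every `t ≥ 1` to the fixed point `α` (not an atom), so this mass is
constant on `[1, ∞)`, hence zero. Among the points of `[-1, 1]`, those of `(1 - α, α - 1)` are the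
only representatives of their classes mod `α`, so there `μ_p` is the image of Haar measure, i.e.
Lebesgue measure divided by `α`.
-/

open Set Filter Topology
open scoped ENNReal BoundedContinuousFunction

section Support

variable {ν : Measure ℝ} [IsFiniteMeasure ν]

theorem tendsto_measure_Ioi_nhds {a : ℝ} (ha : ν {a} = 0) :
    Tendsto (fun t => ν (Ioi t)) (𝓝 a) (𝓝 (ν (Ioi a))) := by
  set u : ℝ → ℝ≥0∞ := fun t => ν (Icc (a - |t - a|) (a + |t - a|))
  have hu : Tendsto u (𝓝 a) (𝓝 0) := by
    rw [← ha]
    refine (tendsto_measure_Icc_nhdsWithin_right ν a).comp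
      (tendsto_nhdsWithin_iff.2 ⟨?_, Eventually.of_forall fun t => abs_nonneg (t - a)⟩)
    have : Tendsto (fun t => |t - a|) (𝓝 a) (𝓝 |a - a|) :=
      (continuous_id.sub continuous_const).abs.tendsto a
    simpa using this
  have hle : ∀ t, ν (Ioi t) ≤ ν (Ioi a) + u t := fun t => by
    refine (measure_mono fun x (hx : t < x) => ?_).trans (measure_union_le _ _)
    rcases lt_or_ge a x with h | h
    · exact Or.inl h
    · exact Or.inr ⟨by linarith [neg_abs_le (t - a)], by linarith [abs_nonneg (t - a)]⟩
  have hge : ∀ t, ν (Ioi a) ≤ ν (Ioi t) + u t := fun t => by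
    refine (measure_mono fun x (hx : a < x) => ?_).trans (measure_union_le _ _)
    rcases lt_or_ge t x with h | h
    · exact Or.inl h
    · exact Or.inr ⟨by linarith [abs_nonneg (t - a)], by linarith [le_abs_self (t - a)]⟩
  refine tendsto_of_tendsto_of_tendsto_of_le_of_le (g := fun t => ν (Ioi a) - u t)
    (h := fun t => ν (Ioi a) + u t) ?_ ?_ (fun t => tsub_le_iff_right.2 (hge t)) hle
  · simpa using ENNReal.Tendsto.sub tendsto_const_nhds hu (Or.inr ENNReal.zero_ne_top)
  · simpa using tendsto_const_nhds.add hu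

theorem tendsto_measure_Ioi_atTop : Tendsto (fun t => ν (Ioi t)) atTop (𝓝 0) := by
  have := tendsto_measure_iInter_atTop (μ := ν) (fun t : ℝ => measurableSet_Ioi.nullMeasurableSet)
    (fun _ _ h => Ioi_subset_Ioi h) ⟨0, measure_ne_top ν _⟩
  rwa [show ⋂ t : ℝ, Ioi t = ∅ from iInter_eq_empty_iff.2 fun x => ⟨x, lt_irrefl x⟩,
    measure_empty] at this

theorem measure_Ioi_eq_zero_of_measure_Ioi_midpoint {a c : ℝ} (hca : c ≤ a) (ha : ν {a} = 0)
    (h : ∀ t, c ≤ t → ν (Ioi t) = ν (Ioi ((t + a) / 2))) : ν (Ioi c) = 0 := by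
  have hconst : ∀ t, c ≤ t → ν (Ioi t) = ν (Ioi a) := by
    intro t ht
    have horbit : ∀ n : ℕ, ν (Ioi t) = ν (Ioi (a + (t - a) * 2⁻¹ ^ n)) := by
      intro n
      induction n with
      | zero => simp
      | succ n ih =>
        have hq : 0 < (2⁻¹ : ℝ) ^ n := by positivity
        have hq' : (2⁻¹ : ℝ) ^ n ≤ 1 := pow_le_one₀ (by norm_num) (by norm_num)
        have hc : c ≤ a + (t - a) * 2⁻¹ ^ n := by
          rcases le_total t a with hta | hta <;> nlinarith
        rw [ih, h _ hc]
        ring_nf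
    have hlim : Tendsto (fun n : ℕ => a + (t - a) * 2⁻¹ ^ n) atTop (𝓝 a) := by
      simpa using tendsto_const_nhds.add ((tendsto_pow_atTop_nhds_zero_of_lt_one
        (by norm_num) (by norm_num : (2⁻¹ : ℝ) < 1)).const_mul (t - a))
    have := (tendsto_measure_Ioi_nhds ha).comp hlim
    simp only [Function.comp_def, ← horbit] at this
    exact tendsto_nhds_unique tendsto_const_nhds this
  have htop : ν (Ioi a) = 0 :=
    tendsto_nhds_unique (tendsto_const_nhds.congr' <| (eventually_ge_atTop c).mono
      fun t ht => (hconst t ht).symm) tendsto_measure_Ioi_atTop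
  rw [hconst c le_rfl, htop]

end Support

namespace AddCircle

variable {T : ℝ}

theorem integral_fourier_mul_two {ρ : Measure (AddCircle T)}
    (hρ : ρ.map (fun y => (2 : ℤ) • y) = ρ) (n : ℤ) :
    ∫ y, fourier (n * 2) y ∂ρ = ∫ y, fourier n y ∂ρ := by
  conv_rhs => rw [← hρ]
  rw [integral_map (continuous_zsmul 2).aemeasurable
    (fourier n).continuous.aestronglyMeasurable]
  simp only [fourier_apply, mul_zsmul]

theorem integral_fourier_eq_zero_of_map_two_zsmul {ρ : Measure (AddCircle T)}
    (hρ : ρ.map (fun y => (2 : ℤ) • y) = ρ)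
    (hlim : Tendsto (fun n : ℤ => ∫ y, fourier n y ∂ρ) cofinite (𝓝 0)) {n : ℤ} (hn : n ≠ 0) :
    ∫ y, fourier n y ∂ρ = 0 := by
  have horbit : ∀ k : ℕ, ∫ y, fourier (n * 2 ^ k) y ∂ρ = ∫ y, fourier n y ∂ρ := by
    intro k
    induction k with
    | zero => simp
    | succ k ih => rw [pow_succ, ← mul_assoc, integral_fourier_mul_two hρ, ih]
  have hinj : Function.Injective fun k : ℕ => n * 2 ^ k := fun k l hkl =>
    Nat.pow_right_injective le_rfl (by exact_mod_cast mul_left_cancel₀ hn hkl)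
  have := hlim.comp (hinj.tendsto_cofinite.mono_left Nat.cofinite_eq_atTop.ge)
  simp only [Function.comp_def, horbit] at this
  exact tendsto_nhds_unique tendsto_const_nhds this

theorem tendsto_integral_fourier_map_coe (hT : T ≠ 0) {μ : Measure ℝ} [SigmaFinite μ]
    (hμ : μ ≪ volume) :
    Tendsto (fun n : ℤ => ∫ y, fourier n y ∂μ.map ((↑) : ℝ → AddCircle T)) cofinite (𝓝 0) := by
  -- the Riemann–Lebesgue lemma for the density `dμ/dx`
  have hRL := Real.tendsto_integral_exp_smul_cocompact fun v => ((μ.rnDeriv volume v).toReal : ℂ)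
  have hfreq : Tendsto (fun n : ℤ => -T⁻¹ * n) cofinite (cocompact ℝ) :=
    Tendsto.comp (show Tendsto (fun x : ℝ => -T⁻¹ * x) (cocompact ℝ) (cocompact ℝ) from
      (Homeomorph.mulLeft₀ (-T⁻¹) (by simpa using hT)).map_cocompact.le) Int.tendsto_coe_cofinite
  refine (hRL.comp hfreq).congr fun n => ?_
  rw [Function.comp_apply, integral_map AddCircle.measurable_mk'.aemeasurable
    (fourier n).continuous.aestronglyMeasurable, ← integral_rnDeriv_smul hμ]
  congr 1 with v
  rw [fourier_coe_apply, Circle.smul_def, smul_eq_mul, Real.fourierChar_apply, Complex.real_smul,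
    mul_comm]
  congr 2
  push_cast
  ring

variable [hT : Fact (0 < T)]

theorem integral_eq_of_mem_span_fourier {ρ ρ' : Measure (AddCircle T)} [IsFiniteMeasure ρ]
    [IsFiniteMeasure ρ'] (h : ∀ n : ℤ, ∫ y, fourier n y ∂ρ = ∫ y, fourier n y ∂ρ')
    {φ : C(AddCircle T, ℂ)} (hφ : φ ∈ Submodule.span ℂ (range fourier)) :
    ∫ y, φ y ∂ρ = ∫ y, φ y ∂ρ' := by
  have hint : ∀ (ψ : C(AddCircle T, ℂ)) (ν : Measure (AddCircle T)) [IsFiniteMeasure ν],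
      Integrable ψ ν := fun ψ ν _ =>
    ψ.continuous.integrable_of_hasCompactSupport (HasCompactSupport.of_compactSpace _)
  induction hφ using Submodule.span_induction with
  | mem _ hψ => obtain ⟨n, rfl⟩ := hψ; exact h n
  | zero => simp
  | add ψ χ _ _ hψ hχ =>
    simp only [ContinuousMap.add_apply]
    rw [integral_add (hint ψ ρ) (hint χ ρ), integral_add (hint ψ ρ') (hint χ ρ'), hψ, hχ]
  | smul c ψ _ hψ => simp only [ContinuousMap.smul_apply, smul_eq_mul, integral_const_mul, hψ]

theorem measure_ext_of_integral_fourier {ρ ρ' : Measure (AddCircle T)} [IsFiniteMeasure ρ]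
    [IsFiniteMeasure ρ'] (h : ∀ n : ℤ, ∫ y, fourier n y ∂ρ = ∫ y, fourier n y ∂ρ') :
    ρ = ρ' := by
  let A : StarSubalgebra ℂ (AddCircle T →ᵇ ℂ) :=
    fourierSubalgebra.comap (BoundedContinuousFunction.toContinuousMapStarₐ ℂ)
  refine ext_of_forall_mem_subalgebra_integral_eq_of_polish (A := A) ?_ fun g hg => ?_
  · refine Subalgebra.separatesPoints_monotone ?_ fourierSubalgebra_separatesPoints
    intro φ hφ
    exact ⟨BoundedContinuousFunction.mkOfCompact φ, hφ, rfl⟩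
  · refine integral_eq_of_mem_span_fourier h (φ := g.toContinuousMap) ?_
    rw [← fourierSubalgebra_coe]
    exact hg

theorem integral_fourier_haarAddCircle {n : ℤ} (hn : n ≠ 0) :
    ∫ y, fourier n y ∂(haarAddCircle (T := T)) = 0 :=
  integral_eq_zero_of_add_right_eq_neg (fourier_add_half_inv_index hn hT.out)

theorem eq_haarAddCircle_of_integral_fourier {ρ : Measure (AddCircle T)} [IsProbabilityMeasure ρ]
    (h : ∀ n ≠ 0, ∫ y, fourier n y ∂ρ = 0) : ρ = haarAddCircle :=
  measure_ext_of_integral_fourier fun n => by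
    rcases eq_or_ne n 0 with rfl | hn
    · simp
    · rw [h n hn, integral_fourier_haarAddCircle hn]

end AddCircle

theorem addCircle_coe_randSymDoubling (α : ℝ) (j : Bool) (x : ℝ) :
    ((randSymDoubling α j x : ℝ) : AddCircle α) = (2 : ℤ) • (x : AddCircle α) := by
  cases j <;> simp only [randSymDoubling] <;> split_ifs <;> simp [two_mul, two_zsmul]

theorem preimage_randSymDoubling_setOf_lt_abs {α : ℝ} (hα₀ : 0 ≤ α) (hα₂ : α ≤ 2) (j : Bool) {t : ℝ}
    (ht : 1 ≤ t) : randSymDoubling α j ⁻¹' {x | t < |x|} = {x | (t + α) / 2 < |x|} := by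
  ext x
  cases j <;> simp only [randSymDoubling, mem_preimage, mem_ofPred_eq, lt_abs] <;> split_ifs <;>
    constructor <;> rintro (h | h) <;> first | (left; linarith) | (right; linarith)

def IsRandSymDoublingStationary (α p : ℝ) (μ : Measure ℝ) : Prop :=
  ∀ B : Set ℝ, MeasurableSet B →
    μ B = ENNReal.ofReal p * μ (randSymDoubling α false ⁻¹' B)
      + ENNReal.ofReal (1-p) * μ (randSymDoubling α true ⁻¹' B)

namespace IsRandSymDoublingStationary

variable {α p : ℝ} {μ : Measure ℝ}

theorem measure_eq_of_preimage_eq (hμ : IsRandSymDoublingStationary α p μ) (hp₀ : 0 ≤ p)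
    (hp₁ : p ≤ 1) {B B' : Set ℝ} (hB : MeasurableSet B)
    (h : ∀ j, randSymDoubling α j ⁻¹' B = B') : μ B = μ B' := by
  rw [hμ B hB, h, h, ← add_mul, ← ENNReal.ofReal_add hp₀ (sub_nonneg.2 hp₁), add_sub_cancel,
    ENNReal.ofReal_one, one_mul]

theorem measure_one_lt_abs_eq_zero [IsFiniteMeasure μ] (hμ : IsRandSymDoublingStationary α p μ)
    (hp₀ : 0 ≤ p) (hp₁ : p ≤ 1) (hα₁ : 1 ≤ α) (hα₂ : α ≤ 2) (hac : μ ≪ volume) :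
    μ {x | 1 < |x|} = 0 := by
  have hmap : ∀ t, μ.map abs (Ioi t) = μ {x | t < |x|} := fun t =>
    Measure.map_apply measurable_abs measurableSet_Ioi
  have hα : μ.map abs {α} = 0 := by
    rw [Measure.map_apply measurable_abs (measurableSet_singleton α)]
    refine hac (measure_mono_null (fun x (hx : |x| = α) => ?_)
      ((toFinite {α, -α}).measure_zero volume))
    rcases abs_choice x with h | h <;> simp [← hx, h]
  rw [← hmap]
  refine measure_Ioi_eq_zero_of_measure_Ioi_midpoint hα₁ hα fun t ht => ?_
  rw [hmap, hmap]
  exact hμ.measure_eq_of_preimage_eq hp₀ hp₁ (measurableSet_lt measurable_const measurable_abs)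
    fun j => preimage_randSymDoubling_setOf_lt_abs (by linarith) hα₂ j ht

theorem map_two_zsmul_map_coe (hμ : IsRandSymDoublingStationary α p μ) (hp₀ : 0 ≤ p)
    (hp₁ : p ≤ 1) :
    (μ.map ((↑) : ℝ → AddCircle α)).map (fun y => (2 : ℤ) • y) = μ.map (↑) := by
  ext C hC
  have hC₂ := (continuous_zsmul 2).measurable hC
  rw [Measure.map_apply (continuous_zsmul 2).measurable hC,
    Measure.map_apply AddCircle.measurable_mk' hC, Measure.map_apply AddCircle.measurable_mk' hC₂]
  refine (hμ.measure_eq_of_preimage_eq hp₀ hp₁ (AddCircle.measurable_mk' hC) fun j => ?_).symm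
  ext x
  simp [addCircle_coe_randSymDoubling]

theorem map_coe_eq_haarAddCircle [Fact (0 < α)] [IsProbabilityMeasure μ]
    (hμ : IsRandSymDoublingStationary α p μ) (hp₀ : 0 ≤ p) (hp₁ : p ≤ 1) (hac : μ ≪ volume) :
    μ.map ((↑) : ℝ → AddCircle α) = AddCircle.haarAddCircle := by
  have : IsProbabilityMeasure (μ.map ((↑) : ℝ → AddCircle α)) :=
    Measure.isProbabilityMeasure_map AddCircle.measurable_mk'.aemeasurable
  exact AddCircle.eq_haarAddCircle_of_integral_fourier fun n hn =>
    AddCircle.integral_fourier_eq_zero_of_map_two_zsmul (hμ.map_two_zsmul_map_coe hp₀ hp₁)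
      (AddCircle.tendsto_integral_fourier_map_coe (Fact.out : 0 < α).ne' hac) hn

end IsRandSymDoublingStationary

section MiddleInterval

variable {α : ℝ}

theorem measurableSet_coe_image {B : Set ℝ} (hB : MeasurableSet B) :
    MeasurableSet ((↑) '' B : Set (AddCircle α)) := by
  rw [measurableSet_quotient]
  change MeasurableSet (((↑) : ℝ → AddCircle α) ⁻¹' ((↑) '' B))
  rw [QuotientAddGroup.preimage_image_mk]
  exact MeasurableSet.iUnion fun x => measurable_add_const _ hB

theorem coe_preimage_image_subset (hα : 0 ≤ α) {B : Set ℝ} (hB : B ⊆ Ioo (1 - α) (α - 1)) :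
    ((↑) : ℝ → AddCircle α) ⁻¹' ((↑) '' B) ⊆ B ∪ {x | 1 < |x|} := by
  rintro x ⟨b, hb, hbx⟩
  obtain ⟨k, hk⟩ := AddSubgroup.mem_zmultiples_iff.1 (QuotientAddGroup.eq.1 hbx)
  rw [zsmul_eq_mul] at hk
  obtain ⟨hb₁, hb₂⟩ := hB hb
  rcases lt_trichotomy k 0 with hk0 | rfl | hk0
  · have hk1 : (k : ℝ) ≤ -1 := by exact_mod_cast Int.le_sub_one_of_lt hk0
    have := mul_le_mul_of_nonneg_right hk1 hα
    right
    show 1 < |x|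
    exact lt_abs.2 (Or.inr (by linarith))
  · have : x = b := by push_cast at hk; linarith
    exact Or.inl (this ▸ hb)
  · have hk1 : (1 : ℝ) ≤ k := by exact_mod_cast hk0
    have := mul_le_mul_of_nonneg_right hk1 hα
    right
    show 1 < |x|
    exact lt_abs.2 (Or.inl (by linarith))

theorem measure_coe_preimage_image (hα : 0 ≤ α) {B : Set ℝ} (hB : B ⊆ Ioo (1 - α) (α - 1))
    {ν : Measure ℝ} (hν : ν {x | 1 < |x|} = 0) :
    ν (((↑) : ℝ → AddCircle α) ⁻¹' ((↑) '' B)) = ν B :=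
  le_antisymm ((measure_mono (coe_preimage_image_subset hα hB)).trans
      ((measure_union_le _ _).trans (by rw [hν, add_zero])))
    (measure_mono (subset_preimage_image _ _))

theorem measure_eq_ofReal_inv_mul_volume [hα : Fact (0 < α)] (hα₂ : α ≤ 2) {μ : Measure ℝ}
    (hρ : μ.map ((↑) : ℝ → AddCircle α) = AddCircle.haarAddCircle)
    (hsupp : μ {x | 1 < |x|} = 0) {B : Set ℝ} (hBI : B ⊆ Ioo (1 - α) (α - 1))
    (hB : MeasurableSet B) :
    μ B = ENNReal.ofReal α⁻¹ * volume B := by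
  set C : Set (AddCircle α) := (↑) '' B
  have hC : MeasurableSet C := measurableSet_coe_image hB
  -- a fundamental domain of `αℤ` inside `[-1, 1]`
  set I := Ioc (-(α / 2)) (-(α / 2) + α)
  have hI : volume.restrict I {x | 1 < |x|} = 0 := by
    rw [Measure.restrict_apply' measurableSet_Ioc]
    refine measure_mono_null (fun x ⟨hx, hxI⟩ => ?_) measure_empty
    exact (show 1 < |x| from hx).trans_le (abs_le.2 ⟨by linarith [hxI.1], by linarith [hxI.2]⟩)
      |>.false
  have hμB : μ B = AddCircle.haarAddCircle C := by
    rw [← measure_coe_preimage_image hα.out.le hBI hsupp, ← Measure.map_apply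
      AddCircle.measurable_mk' hC, hρ]
  have hvolB : volume B = ENNReal.ofReal α * AddCircle.haarAddCircle C := by
    have hBI' : B ⊆ I := fun x hx => ⟨by linarith [(hBI hx).1], by linarith [(hBI hx).2]⟩
    rw [← Measure.restrict_eq_self volume hBI',
      ← measure_coe_preimage_image hα.out.le hBI hI,
      (AddCircle.measurePreserving_mk α (-(α / 2))).measure_preimage hC.nullMeasurableSet,
      AddCircle.volume_eq_smul_haarAddCircle, Measure.smul_apply, smul_eq_mul]
  rw [hμB, hvolB, ← mul_assoc, ← ENNReal.ofReal_mul (inv_nonneg.2 hα.out.le),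
    inv_mul_cancel₀ hα.out.ne', ENNReal.ofReal_one, one_mul]

end MiddleInterval

theorem ae_restrict_eq_const_of_ofReal_setIntegral_eq {X : Type*} [MeasurableSpace X]
    {μ : Measure X} {f : X → ℝ} {I : Set X} {c : ℝ} (hc : 0 < c) (hI : MeasurableSet I)
    (hμI : μ I ≠ ∞) (hf : IntegrableOn f I μ)
    (h : ∀ B ⊆ I, MeasurableSet B → ENNReal.ofReal (∫ x in B, f x ∂μ) = ENNReal.ofReal c * μ B) :
    ∀ᵐ x ∂μ.restrict I, f x = c := by
  have : IsFiniteMeasure (μ.restrict I) := isFiniteMeasure_restrict.2 hμI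
  refine ae_eq_of_forall_setIntegral_eq_of_sigmaFinite (fun s _ _ => hf.integrableOn)
    (fun s _ _ => integrableOn_const) fun s hs _ => ?_
  rw [Measure.restrict_restrict hs, setIntegral_const, smul_eq_mul]
  have hsI := h (s ∩ I) inter_subset_right (hs.inter hI)
  by_cases h0 : μ (s ∩ I) = 0
  · simp [Measure.restrict_eq_zero.2 h0, measureReal_def, h0]
  · have hpos : 0 < ∫ x in s ∩ I, f x ∂μ :=
      ENNReal.ofReal_pos.1 (hsI ▸ ENNReal.mul_pos (ENNReal.ofReal_pos.2 hc).ne' h0)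
    have := congrArg ENNReal.toReal hsI
    rwa [ENNReal.toReal_ofReal hpos.le, ENNReal.toReal_mul, ENNReal.toReal_ofReal hc.le,
      mul_comm] at this

theorem stmt16_general (α p : ℝ) (hα : α ∈ Set.Ioo (1:ℝ) (3/2)) (hp : p ∈ Set.Ioo (0:ℝ) 1)
    (μ : Measure ℝ) (hprob : IsProbabilityMeasure μ)
    (f : ℝ → ℝ)
    (hdens : ∀ B : Set ℝ, MeasurableSet B → μ B = ENNReal.ofReal (∫ x in B, f x))
    (hstat : ∀ B : Set ℝ, MeasurableSet B →
      μ B = ENNReal.ofReal p * μ (randSymDoubling α false ⁻¹' B)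
          + ENNReal.ofReal (1-p) * μ (randSymDoubling α true ⁻¹' B)) :
    ∀ᵐ x ∂(volume.restrict (Set.Icc (1-α) (α-1))), f x = 1/α := by
  obtain ⟨hα₁, hα₂⟩ := hα
  have : Fact (0 < α) := ⟨by linarith⟩
  have hst : IsRandSymDoublingStationary α p μ := hstat
  have hac : μ ≪ volume := Measure.AbsolutelyContinuous.mk fun s hs hs0 => by
    rw [hdens s hs, Measure.restrict_eq_zero.2 hs0, integral_zero_measure, ENNReal.ofReal_zero]
  have hf : Integrable f := by
    by_contra hf
    simpa [integral_undef hf] using hdens univ MeasurableSet.univ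
  have hsupp := hst.measure_one_lt_abs_eq_zero hp.1.le hp.2.le hα₁.le (by linarith) hac
  have hρ := hst.map_coe_eq_haarAddCircle hp.1.le hp.2.le hac
  rw [Measure.restrict_congr_set Ioo_ae_eq_Icc.symm]
  refine ae_restrict_eq_const_of_ofReal_setIntegral_eq (by positivity) measurableSet_Ioo
    measure_Ioo_lt_top.ne hf.integrableOn fun B hBI hB => ?_
  rw [← hdens B hB, one_div, measure_eq_ofReal_inv_mul_volume (by linarith) hρ hsupp hBI hB]

/-- Let `α ∈ (1,3/2)` be a strong random matching parameter (i.e. `S_α` has matching: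
`1/2 < S_α^m(1) < α - 1/2` for some `m`, which gives strong random matching with
`M = M_α + 1`), and `p ∈ (0,1)`.  If `μ_p` is the unique stationary probability measure
of `R_α` that is absolutely continuous with respect to Lebesgue measure, with density
`f_p`, then `f_p` is constant equal to `1/α` on `[1-α, α-1]` (almost everywhere). -/
theorem stmt16 (α p : ℝ) (hα : α ∈ Set.Ioo (1:ℝ) (3/2)) (hp : p ∈ Set.Ioo (0:ℝ) 1)
    (m : ℕ) (hm : matchCond α m)
    (μ : Measure ℝ) (hprob : IsProbabilityMeasure μ)
    (f : ℝ → ℝ)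
    (hdens : ∀ B : Set ℝ, MeasurableSet B → μ B = ENNReal.ofReal (∫ x in B, f x))
    (hstat : ∀ B : Set ℝ, MeasurableSet B →
      μ B = ENNReal.ofReal p * μ (randSymDoubling α false ⁻¹' B)
          + ENNReal.ofReal (1-p) * μ (randSymDoubling α true ⁻¹' B))
    (huniq : ∀ ν : Measure ℝ, IsProbabilityMeasure ν → ν ≪ volume →
      (∀ B : Set ℝ, MeasurableSet B →
        ν B = ENNReal.ofReal p * ν (randSymDoubling α false ⁻¹' B)
            + ENNReal.ofReal (1-p) * ν (randSymDoubling α true ⁻¹' B)) → ν = μ) :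
    ∀ᵐ x ∂(volume.restrict (Set.Icc (1-α) (α-1))), f x = 1/α :=
  stmt16_general α p hα hp μ hprob f hdens hstat
end

section
/- Let α ∈ (1,3/2) and suppose the constants γ_1, γ_3 ≥ 0 and the density f_p has the form f_p = (γ_1 + 1/α)·(1-p)/2 · Σ_{k=0}^{M-2} (p_{b̄_k}/2^k)·1_{[-S^k(1), α-S^k(1))} + (1/α + γ_3)·p/2 · Σ_{k=0}^{M-2} (p_{b_k}/2^k)·1_{[S^k(1)-α, S^k(1))}, with S^k(1) ∈ [α-1,1] and α-S^k(1) ∈ [α-1,1] for k < M-1. Then f_p(x) ≤ 1/α - (1-p)(γ_1 + 1/α)/2 for all x > α-1, and f_p(x) ≤ 1/α - p(1/α + γ_3)/2 for all x < 1-α. -/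
open Finset

section IndicatorSums

variable {ι X : Type*} (s : Finset ι) (c : ι → ℝ) (t : ι → Set X) (x : X)

theorem sum_mul_indicator_le_sum (hc : ∀ i ∈ s, 0 ≤ c i) :
    ∑ i ∈ s, c i * (t i).indicator (fun _ => (1:ℝ)) x ≤ ∑ i ∈ s, c i :=
  sum_le_sum fun i hi =>
    mul_le_of_le_one_right (hc i hi) (Set.indicator_le_self' (fun _ _ => zero_le_one) x)

theorem sum_mul_indicator_le_sum_sub (hc : ∀ i ∈ s, 0 ≤ c i) {i₀ : ι} (hi₀ : i₀ ∈ s)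
    (hx : x ∉ t i₀) :
    ∑ i ∈ s, c i * (t i).indicator (fun _ => (1:ℝ)) x ≤ ∑ i ∈ s, c i - c i₀ := by
  classical
  rw [← sum_erase_add _ _ hi₀, ← sum_erase_add _ _ hi₀, Set.indicator_of_notMem hx, mul_zero,
    add_zero, add_sub_cancel_right]
  exact sum_mul_indicator_le_sum _ c t x fun i hi => hc i (mem_of_mem_erase hi)

end IndicatorSums

theorem prod_ite_nonneg {ι : Type*} (s : Finset ι) (P : ι → Prop) [DecidablePred P] {a b : ℝ}
    (ha : 0 ≤ a) (hb : 0 ≤ b) : 0 ≤ ∏ i ∈ s, (if P i then a else b) :=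
  prod_nonneg fun _ _ => ite_nonneg ha hb

theorem stmt18_general (α p γ₁ γ₃ : ℝ) (M : ℕ)
    (hα : α ∈ Set.Ioo (1:ℝ) (3/2)) (hp : p ∈ Set.Ioo (0:ℝ) 1)
    (hγ₁ : 0 ≤ γ₁) (hγ₃ : 0 ≤ γ₃) (hM : 2 ≤ M)
    (w wbar : ℕ → ℝ)
    (hw : ∀ k, w k = ∏ n ∈ Finset.range k,
      (if 1/2 < (symDoubling α)^[n] 1 then 1 - p else p))
    (hwbar : ∀ k, wbar k = ∏ n ∈ Finset.range k,
      (if 1/2 < (symDoubling α)^[n] 1 then p else 1 - p))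
    (f : ℝ → ℝ)
    (hf : ∀ x, f x =
      (γ₁ + 1/α) * ((1-p)/2) * ∑ k ∈ Finset.range (M-1), (wbar k / 2^k) *
        Set.indicator
          (Set.Ico (-((symDoubling α)^[k] 1)) (α - (symDoubling α)^[k] 1))
          (fun _ => (1:ℝ)) x
      + (1/α + γ₃) * (p/2) * ∑ k ∈ Finset.range (M-1), (w k / 2^k) *
        Set.indicator
          (Set.Ico ((symDoubling α)^[k] 1 - α) ((symDoubling α)^[k] 1))
          (fun _ => (1:ℝ)) x)
    (hnorm : (γ₁ + 1/α) * ((1-p)/2) * (∑ k ∈ Finset.range (M-1), wbar k / 2^k)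
      + (1/α + γ₃) * (p/2) * (∑ k ∈ Finset.range (M-1), w k / 2^k) = 1/α) :
    (∀ x : ℝ, α - 1 < x → f x ≤ 1/α - (1-p) * (γ₁ + 1/α) / 2) ∧
    (∀ x : ℝ, x < 1 - α → f x ≤ 1/α - p * (1/α + γ₃) / 2) := by
  obtain ⟨hp₀, hp₁⟩ := hp
  have hα₀ : 0 ≤ 1/α := one_div_nonneg.2 (by linarith [hα.1])
  have hA : 0 ≤ (γ₁ + 1/α) * ((1-p)/2) := mul_nonneg (by linarith) (by linarith)
  have hB : 0 ≤ (1/α + γ₃) * (p/2) := mul_nonneg (by linarith) (by linarith)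
  have hw_nonneg : ∀ k ∈ range (M-1), 0 ≤ w k / 2^k := fun k _ => by
    rw [hw]; exact div_nonneg (prod_ite_nonneg _ _ (by linarith) hp₀.le) (by positivity)
  have hwbar_nonneg : ∀ k ∈ range (M-1), 0 ≤ wbar k / 2^k := fun k _ => by
    rw [hwbar]; exact div_nonneg (prod_ite_nonneg _ _ hp₀.le (by linarith)) (by positivity)
  have h₀ : 0 ∈ range (M-1) := mem_range.2 (by omega)
  refine ⟨fun x hx => ?_, fun x hx => ?_⟩
  · have h₁ := sum_mul_indicator_le_sum_sub _ _
      (fun k => Set.Ico (-((symDoubling α)^[k] 1)) (α - (symDoubling α)^[k] 1)) x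
      hwbar_nonneg h₀ (lt_asymm hx ·.2)
    have h₂ := sum_mul_indicator_le_sum _ _
      (fun k => Set.Ico ((symDoubling α)^[k] 1 - α) ((symDoubling α)^[k] 1)) x hw_nonneg
    simp only [hwbar 0, prod_range_zero, pow_zero, div_one] at h₁
    rw [hf x]
    linarith [mul_le_mul_of_nonneg_left h₁ hA, mul_le_mul_of_nonneg_left h₂ hB]
  · have h₁ := sum_mul_indicator_le_sum _ _
      (fun k => Set.Ico (-((symDoubling α)^[k] 1)) (α - (symDoubling α)^[k] 1)) x
      hwbar_nonneg
    have h₂ := sum_mul_indicator_le_sum_sub _ _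
      (fun k => Set.Ico ((symDoubling α)^[k] 1 - α) ((symDoubling α)^[k] 1)) x
      hw_nonneg h₀ (hx.not_ge ·.1)
    simp only [hw 0, prod_range_zero, pow_zero, div_one] at h₂
    rw [hf x]
    linarith [mul_le_mul_of_nonneg_left h₁ hA, mul_le_mul_of_nonneg_left h₂ hB]

/-- Let `α ∈ (1,3/2)`, `p ∈ (0,1)`, `γ₁, γ₃ ≥ 0`, and `M ≥ 2` (the random matching
exponent).  Suppose `S^k(1) ∈ [α-1,1]` and `α - S^k(1) ∈ [α-1,1]` for all `k < M-1`, let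
`w k = p_{b_k}` and `wbar k = p_{b̄_k}` be the weights of the digit word of `1` and of its
complement (`p_0 = p`, `p_1 = 1-p`), and suppose the density has the form
`f = (γ₁+1/α)·(1-p)/2·Σ_{k=0}^{M-2} (p_{b̄_k}/2^k)·1_{[-S^k(1), α-S^k(1))}
  + (1/α+γ₃)·p/2·Σ_{k=0}^{M-2} (p_{b_k}/2^k)·1_{[S^k(1)-α, S^k(1))}`,
normalised so that its constant value on `[1-α,α-1]` is `1/α`.  Then
`f(x) ≤ 1/α - (1-p)(γ₁+1/α)/2` for all `x > α-1`, and
`f(x) ≤ 1/α - p(1/α+γ₃)/2` for all `x < 1-α`. -/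
theorem stmt18 (α p γ₁ γ₃ : ℝ) (M : ℕ)
    (hα : α ∈ Set.Ioo (1:ℝ) (3/2)) (hp : p ∈ Set.Ioo (0:ℝ) 1)
    (hγ₁ : 0 ≤ γ₁) (hγ₃ : 0 ≤ γ₃) (hM : 2 ≤ M)
    (horb : ∀ k < M - 1,
      (symDoubling α)^[k] 1 ∈ Set.Icc (α-1) 1 ∧
      α - (symDoubling α)^[k] 1 ∈ Set.Icc (α-1) 1)
    (w wbar : ℕ → ℝ)
    (hw : ∀ k, w k = ∏ n ∈ Finset.range k,
      (if 1/2 < (symDoubling α)^[n] 1 then 1 - p else p))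
    (hwbar : ∀ k, wbar k = ∏ n ∈ Finset.range k,
      (if 1/2 < (symDoubling α)^[n] 1 then p else 1 - p))
    (f : ℝ → ℝ)
    (hf : ∀ x, f x =
      (γ₁ + 1/α) * ((1-p)/2) * ∑ k ∈ Finset.range (M-1), (wbar k / 2^k) *
        Set.indicator
          (Set.Ico (-((symDoubling α)^[k] 1)) (α - (symDoubling α)^[k] 1))
          (fun _ => (1:ℝ)) x
      + (1/α + γ₃) * (p/2) * ∑ k ∈ Finset.range (M-1), (w k / 2^k) *
        Set.indicator
          (Set.Ico ((symDoubling α)^[k] 1 - α) ((symDoubling α)^[k] 1))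
          (fun _ => (1:ℝ)) x)
    (hnorm : (γ₁ + 1/α) * ((1-p)/2) * (∑ k ∈ Finset.range (M-1), wbar k / 2^k)
      + (1/α + γ₃) * (p/2) * (∑ k ∈ Finset.range (M-1), w k / 2^k) = 1/α) :
    (∀ x : ℝ, α - 1 < x → f x ≤ 1/α - (1-p) * (γ₁ + 1/α) / 2) ∧
    (∀ x : ℝ, x < 1 - α → f x ≤ 1/α - p * (1/α + γ₃) / 2) :=
  stmt18_general α p γ₁ γ₃ M hα hp hγ₁ hγ₃ hM w wbar hw hwbar f hf hnorm
end

section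
/- Let α ∈ (1,3/2) be a strong random matching parameter for the random symmetric doubling map and p ∈ (0,1). If μ_p is the stationary probability measure with density bounded above by 1/α − (1−p)c₁/2 on (α−1,1] and by 1/α − p·c₂/2 on [−1,1−α), where c₁ = γ₁+1/α > 0, c₂ = 1/α+γ₃ > 0, and density equal to 1/α on [1−α,α−1], then π_0(α,p) = (α−1)/α + (α−1)/(2α) + p·μ_p([α−1,1/2]) + (1−p)·μ_p([−1/2,1−α]) ≤ 1/2 − ((3−2α)/2)·(p(1−p)/2)·min{c₁,c₂} < 1/2. -/
/-! Integrating the density bounds over `[α-1, 1/2]` and `[-1/2, 1-α]`, both of length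
`L = (3-2α)/2`, gives `p·μ[α-1,1/2] + (1-p)·μ[-1/2,1-α] ≤ L/α - L·p(1-p)(c₁+c₂)/2`: the deficit
`(1-p)c₁/2` of the density on the right is weighted by `p`, the deficit `p·c₂/2` on the left by
`1-p`. Since `(α-1)/α + (α-1)/(2α) + L/α = 1/2`, the gap to `1/2` is at least
`L·p(1-p)(c₁+c₂)/2 ≥ L·p(1-p)·min{c₁,c₂}/2 > 0`. -/

open MeasureTheory

open Set

theorem toReal_measure_le_of_density_le {X : Type*} [MeasurableSpace X] {μ ν : Measure X}
    {f : X → ℝ} {s : Set X} {b : ℝ} (hμ : μ s = ENNReal.ofReal (∫ x in s, f x ∂ν))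
    (hs : MeasurableSet s) (hsν : ν s < ⊤) (hf0 : ∀ x ∈ s, 0 ≤ f x)
    (hfb : ∀ᵐ x ∂ν, x ∈ s → f x ≤ b) :
    (μ s).toReal ≤ b * ν.real s := by
  have hint : 0 ≤ ∫ x in s, f x ∂ν := setIntegral_nonneg hs hf0
  rw [hμ, ENNReal.toReal_ofReal hint, ← Real.norm_of_nonneg hint]
  refine norm_setIntegral_le_of_norm_le_const_ae' hsν ?_
  filter_upwards [hfb] with x hx hxs
  rw [Real.norm_of_nonneg (hf0 x hxs)]
  exact hx hxs

theorem toReal_measure_Icc_le_of_density_le {μ : Measure ℝ} {f : ℝ → ℝ}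
    (hdens : ∀ B : Set ℝ, MeasurableSet B → μ B = ENNReal.ofReal (∫ x in B, f x))
    (hf0 : ∀ x, 0 ≤ f x) {a b c : ℝ} (hab : a ≤ b) (hfc : ∀ x ∈ Ioo a b, f x ≤ c) :
    (μ (Icc a b)).toReal ≤ c * (b - a) := by
  rw [← Real.volume_real_Icc_of_le hab]
  refine toReal_measure_le_of_density_le (hdens _ measurableSet_Icc) measurableSet_Icc
    measure_Icc_lt_top (fun x _ => hf0 x) ?_
  filter_upwards [(Ioo_ae_eq_Icc (a := a) (b := b) (μ := volume)).mem_iff] with x hx hxs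
  exact hfc x (hx.2 hxs)

theorem convex_combination_le_sub {p a c₁ c₂ t₁ t₂ L : ℝ} (hp : p ∈ Icc (0:ℝ) 1)
    (h₁ : t₁ ≤ (a - (1-p) * c₁ / 2) * L) (h₂ : t₂ ≤ (a - p * c₂ / 2) * L) :
    p * t₁ + (1-p) * t₂ ≤ L * a - L * (p*(1-p)/2) * (c₁ + c₂) :=
  calc p * t₁ + (1-p) * t₂
      ≤ p * ((a - (1-p) * c₁ / 2) * L) + (1-p) * ((a - p * c₂ / 2) * L) := by
        gcongr <;> linarith [hp.1, hp.2]
    _ = L * a - L * (p*(1-p)/2) * (c₁ + c₂) := by ring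

theorem stmt19_general (α p γ₁ γ₃ : ℝ)
    (hα : α ∈ Set.Ioo (1:ℝ) (3/2)) (hp : p ∈ Set.Ioo (0:ℝ) 1)
    (hc₁ : 0 < γ₁ + 1/α) (hc₂ : 0 < 1/α + γ₃)
    (μ : Measure ℝ)
    (f : ℝ → ℝ) (hfnn : ∀ x, 0 ≤ f x)
    (hdens : ∀ B : Set ℝ, MeasurableSet B → μ B = ENNReal.ofReal (∫ x in B, f x))
    (hub1 : ∀ x ∈ Set.Ioc (α-1) (1:ℝ), f x ≤ 1/α - (1-p) * (γ₁ + 1/α) / 2)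
    (hub2 : ∀ x ∈ Set.Ico (-1:ℝ) (1-α), f x ≤ 1/α - p * (1/α + γ₃) / 2) :
    (α-1)/α + (α-1)/(2*α)
        + p * (μ (Set.Icc (α-1) (1/2:ℝ))).toReal
        + (1-p) * (μ (Set.Icc (-(1/2):ℝ) (1-α))).toReal
      ≤ 1/2 - ((3-2*α)/2) * (p*(1-p)/2) * min (γ₁ + 1/α) (1/α + γ₃) ∧
    (α-1)/α + (α-1)/(2*α)
        + p * (μ (Set.Icc (α-1) (1/2:ℝ))).toReal
        + (1-p) * (μ (Set.Icc (-(1/2):ℝ) (1-α))).toReal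
      < 1/2 := by
  obtain ⟨hα1, hα2⟩ := hα
  obtain ⟨hp0, hp1⟩ := hp
  have hright := toReal_measure_Icc_le_of_density_le hdens hfnn (by linarith : α-1 ≤ 1/2)
    fun x hx => hub1 x ⟨hx.1, by linarith [hx.2]⟩
  have hleft := toReal_measure_Icc_le_of_density_le hdens hfnn (by linarith : -(1/2) ≤ 1-α)
    fun x hx => hub2 x ⟨by linarith [hx.1], hx.2⟩
  rw [show 1/2 - (α-1) = (3-2*α)/2 by ring] at hright
  rw [show 1-α - -(1/2) = (3-2*α)/2 by ring] at hleft
  have hsum := convex_combination_le_sub ⟨hp0.le, hp1.le⟩ hright hleft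
  have hhalf : (α-1)/α + (α-1)/(2*α) + (3-2*α)/2 * (1/α) = 1/2 := by
    field_simp [(by linarith : (0:ℝ) < α).ne']
    ring
  have hweight : 0 < ((3-2*α)/2) * (p*(1-p)/2) := by
    have := sub_pos.2 hp1
    have : 0 < (3-2*α)/2 := by linarith
    positivity
  have hmin : min (γ₁ + 1/α) (1/α + γ₃) ≤ (γ₁ + 1/α) + (1/α + γ₃) := by
    linarith [min_le_left (γ₁ + 1/α) (1/α + γ₃)]
  have hmin_le := mul_le_mul_of_nonneg_left hmin hweight.le
  have hmin_pos := mul_pos hweight (lt_min hc₁ hc₂)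
  constructor <;> linarith

/-- Let `α ∈ (1,3/2)` be a strong random matching parameter and `p ∈ (0,1)`.  Suppose
`μ_p` is the stationary probability measure, supported on `[-1,1]`, with (nonnegative)
density `f` satisfying `f ≤ 1/α - (1-p)c₁/2` on `(α-1,1]`, `f ≤ 1/α - p·c₂/2` on
`[-1,1-α)` and `f = 1/α` on `[1-α,α-1]`, where `c₁ = γ₁ + 1/α > 0` and
`c₂ = 1/α + γ₃ > 0`.  Then
`π₀(α,p) = (α-1)/α + (α-1)/(2α) + p·μ_p([α-1,1/2]) + (1-p)·μ_p([-1/2,1-α])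
  ≤ 1/2 - ((3-2α)/2)·(p(1-p)/2)·min{c₁,c₂} < 1/2`. -/
theorem stmt19 (α p γ₁ γ₃ : ℝ)
    (hα : α ∈ Set.Ioo (1:ℝ) (3/2)) (hp : p ∈ Set.Ioo (0:ℝ) 1)
    (m : ℕ) (hm : matchCond α m)
    (hc₁ : 0 < γ₁ + 1/α) (hc₂ : 0 < 1/α + γ₃)
    (μ : Measure ℝ) (hprob : IsProbabilityMeasure μ)
    (f : ℝ → ℝ) (hfnn : ∀ x, 0 ≤ f x)
    (hdens : ∀ B : Set ℝ, MeasurableSet B → μ B = ENNReal.ofReal (∫ x in B, f x))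
    (hsupp : μ (Set.Icc (-1:ℝ) 1)ᶜ = 0)
    (hub1 : ∀ x ∈ Set.Ioc (α-1) (1:ℝ), f x ≤ 1/α - (1-p) * (γ₁ + 1/α) / 2)
    (hub2 : ∀ x ∈ Set.Ico (-1:ℝ) (1-α), f x ≤ 1/α - p * (1/α + γ₃) / 2)
    (hmid : ∀ x ∈ Set.Icc (1-α) (α-1), f x = 1/α) :
    (α-1)/α + (α-1)/(2*α)
        + p * (μ (Set.Icc (α-1) (1/2:ℝ))).toReal
        + (1-p) * (μ (Set.Icc (-(1/2):ℝ) (1-α))).toReal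
      ≤ 1/2 - ((3-2*α)/2) * (p*(1-p)/2) * min (γ₁ + 1/α) (1/α + γ₃) ∧
    (α-1)/α + (α-1)/(2*α)
        + p * (μ (Set.Icc (α-1) (1/2:ℝ))).toReal
        + (1-p) * (μ (Set.Icc (-(1/2):ℝ) (1-α))).toReal
      < 1/2 :=
  stmt19_general α p γ₁ γ₃ hα hp hc₁ hc₂ μ f hfnn hdens hub1 hub2
end
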